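/- Let M be a connected Hausdorff topological space with at least two points, let H be a complex Hilbert space, and let q : M → B(H) be an injective map, continuous for the weak operator topology, such that each q(x) is a rank-one orthogonal projection. Then there exist x, y ∈ M with q(x)·q(y) ≠ q(y)·q(x); in particular the *-algebra generated by the image of q is noncommutative. -/

import Mathlib

/-!
Commuting rank-one projections are either equal or orthogonal. So if all `q x` commuted and `u`
spans the range of `q x₀`, the continuous function `x ↦ ⟪u, q x u⟫` would take only the values
`0` and `1`, the value `1` exactly where `q x = q x₀`. On a connected space it is then constantly
`1`, so `q` is constant, contradicting injectivity.
-/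

open InnerProductSpace

section RankOne

variable {𝕜 E : Type*} [RCLike 𝕜] [NormedAddCommGroup E] [InnerProductSpace 𝕜 E]

theorem rankOne_smul_smul_self (c : 𝕜) (w : E) :
    rankOne 𝕜 (c • w) (c • w) = ((‖c‖ ^ 2 : ℝ) : 𝕜) • rankOne 𝕜 w w := by
  ext v
  simp [smul_smul, ← RCLike.conj_mul, mul_comm]

theorem inner_eq_zero_or_rankOne_eq_of_commute {u w : E} (hu : ‖u‖ = 1) (hw : ‖w‖ = 1)
    (h : Commute (rankOne 𝕜 u u) (rankOne 𝕜 w w)) :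
    ⟪u, w⟫_𝕜 = 0 ∨ rankOne 𝕜 u u = rankOne 𝕜 w w := by
  refine or_iff_not_imp_left.mpr fun huw => ?_
  have happly : ⟪u, w⟫_𝕜 • u = ⟪u, w⟫_𝕜 • ⟪w, u⟫_𝕜 • w := by
    simpa [ContinuousLinearMap.mul_def, inner_smul_right, inner_self_eq_norm_sq_to_K, hw,
      smul_smul] using congrArg (· w) h.eq
  have hu_eq : u = ⟪w, u⟫_𝕜 • w := smul_right_injective E huw happly
  have hc : ‖⟪w, u⟫_𝕜‖ = 1 := by
    simpa [norm_smul, hw, hu] using congrArg norm hu_eq.symm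
  rw [hu_eq, rankOne_smul_smul_self, hc]
  simp

theorem inner_rankOne_self_apply_self {u : E} (hu : ‖u‖ = 1) :
    ⟪u, rankOne 𝕜 u u u⟫_𝕜 = 1 := by
  simp [inner_self_eq_norm_sq_to_K, hu]

theorem inner_rankOne_apply_of_inner_eq_zero {u w : E} (huw : ⟪u, w⟫_𝕜 = 0) :
    ⟪u, rankOne 𝕜 w w u⟫_𝕜 = 0 := by
  simp [inner_smul_right, huw]

end RankOne

theorem exists_noncommuting_coherent_states
    {M : Type*} [TopologicalSpace M] [ConnectedSpace M]
    {H : Type*} [NormedAddCommGroup H] [InnerProductSpace ℂ H]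
    (hM : ∃ x y : M, x ≠ y)
    (q : M → (H →L[ℂ] H))
    (hq_inj : Function.Injective q)
    (hq_cont : ∀ v w : H, Continuous fun x => ⟪v, q x w⟫_ℂ)
    (hq_rank1 : ∀ x, ∃ u : H, ‖u‖ = 1 ∧ ∀ v, q x v = ⟪u, v⟫_ℂ • u) :
    ∃ x y : M, q x * q y ≠ q y * q x := by
  by_contra! hcomm
  choose u hu hqu using hq_rank1
  have hq : ∀ x, q x = rankOne ℂ (u x) (u x) := fun x => ContinuousLinearMap.ext (hqu x)
  obtain ⟨x₀, y₀, hne⟩ := hM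
  have hval₀ : ⟪u x₀, q x₀ (u x₀)⟫_ℂ = 1 := hq x₀ ▸ inner_rankOne_self_apply_self (hu x₀)
  have horth_or_eq : ∀ x, ⟪u x₀, q x (u x₀)⟫_ℂ = 0 ∨ q x₀ = q x := fun x => by
    rw [hq x, hq x₀]
    refine (inner_eq_zero_or_rankOne_eq_of_commute (hu x₀) (hu x) ?_).imp_left
      inner_rankOne_apply_of_inner_eq_zero
    rw [← hq, ← hq]
    exact hcomm x₀ x
  have hmaps : Set.MapsTo (fun x => ⟪u x₀, q x (u x₀)⟫_ℂ) Set.univ {0, 1} := by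
    rintro x -
    simp only [Set.mem_insert_iff, Set.mem_singleton_iff]
    exact (horth_or_eq x).imp_right fun (h : q x₀ = q x) => h ▸ hval₀
  have hconst := isPreconnected_univ.constant_of_mapsTo (Set.toFinite _).isDiscrete
    (hq_cont _ _).continuousOn hmaps (Set.mem_univ y₀) (Set.mem_univ x₀)
  exact hne (hq_inj ((horth_or_eq y₀).resolve_left (by simp [hconst, hval₀])))
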